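/- arXiv:0711.0527 — 4 statements merged into one kernel-verified Lean document; each statement's English description precedes it below -/
import Mathlib

section
/- Let m ≥ 1 and 0 ≤ z ≤ m−1. The number of pairs (S, f), where S is a z-element subset of {2,…,m} and f : S → ℕ is a function such that for every j ∈ S either f(j) = 0 or f(j) ∈ S with f(j) < j, equals C(m−1, z)·z!. -/
open Finset

lemma prod_lemma : ∀ (n : ℕ) (S : Finset ℕ), S.card = n →
    ∏ j ∈ S, (1 + (S.filter (· < j)).card) = Nat.factorial n := by
  intro n
  induction n with
  | zero => intro S hS; simp [Finset.card_eq_zero.mp hS]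
  | succ n ih =>
    intro S hS
    have hne : S.Nonempty := by rw [← Finset.card_pos, hS]; omega
    set M := S.max' hne with hM
    have hMS : M ∈ S := S.max'_mem hne
    have hins : S = insert M (S.erase M) := (Finset.insert_erase hMS).symm
    have hfiltM : S.filter (· < M) = S.erase M := by
      ext x
      simp only [Finset.mem_filter, Finset.mem_erase]
      constructor
      · rintro ⟨hx, hlt⟩; exact ⟨ne_of_lt hlt, hx⟩
      · rintro ⟨hne', hx⟩; exact ⟨hx, lt_of_le_of_ne (S.le_max' x hx) hne'⟩
    have hfilt : ∀ j ∈ S.erase M, S.filter (· < j) = (S.erase M).filter (· < j) := by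
      intro j hj
      ext x
      simp only [Finset.mem_filter, Finset.mem_erase]
      constructor
      · rintro ⟨hx, hlt⟩
        refine ⟨⟨?_, hx⟩, hlt⟩
        rintro rfl
        exact absurd (S.le_max' j (Finset.mem_of_mem_erase hj)) (not_le.mpr hlt)
      · rintro ⟨⟨_, hx⟩, hlt⟩; exact ⟨hx, hlt⟩
    have hcard : (S.erase M).card = n := by
      rw [Finset.card_erase_of_mem hMS, hS]; rfl
    calc ∏ j ∈ S, (1 + (S.filter (· < j)).card)
        = (1 + (S.filter (· < M)).card) *
            ∏ j ∈ S.erase M, (1 + (S.filter (· < j)).card) :=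
          (Finset.mul_prod_erase S _ hMS).symm
      _ = (n + 1) * ∏ j ∈ S.erase M, (1 + ((S.erase M).filter (· < j)).card) := by
          rw [hfiltM, hcard, Finset.prod_congr rfl (fun j hj => by rw [hfilt j hj])]
          ring
      _ = (n + 1) * Nat.factorial n := by rw [ih _ hcard]
      _ = Nat.factorial (n + 1) := (Nat.factorial_succ n).symm

/-- the number of pairs `(S, f)` with `S ⊆ {2,…,m}`, `|S| = z`, and
`f : S → ℕ` such that every value `f(j)` is either `0` or a smaller element of `S`,
equals `C(m−1, z)·z!`.  (A function on `S` is encoded as a function `ℕ → ℕ`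
vanishing outside `S`.) -/
theorem card_closed_pairs (m z : ℕ) (hm : 1 ≤ m) (hz : z ≤ m - 1) :
    Nat.card {p : Finset ℕ × (ℕ → ℕ) //
        p.1 ⊆ Finset.Icc 2 m ∧ p.1.card = z ∧
        (∀ j ∈ p.1, p.2 j = 0 ∨ (p.2 j ∈ p.1 ∧ p.2 j < j)) ∧
        (∀ j ∉ p.1, p.2 j = 0)} =
      Nat.choose (m - 1) z * Nat.factorial z := by
  classical
  have e : {p : Finset ℕ × (ℕ → ℕ) //
        p.1 ⊆ Finset.Icc 2 m ∧ p.1.card = z ∧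
        (∀ j ∈ p.1, p.2 j = 0 ∨ (p.2 j ∈ p.1 ∧ p.2 j < j)) ∧
        (∀ j ∉ p.1, p.2 j = 0)} ≃
      Σ S : ((Finset.Icc 2 m).powersetCard z : Finset (Finset ℕ)),
        ∀ j : (S.1 : Finset ℕ), (insert 0 (S.1.filter (· < (j : ℕ))) : Finset ℕ) := by
    refine ⟨fun p => ⟨⟨p.1.1, Finset.mem_powersetCard.mpr ⟨p.2.1, p.2.2.1⟩⟩,
      fun j => ⟨p.1.2 j, ?_⟩⟩,
      fun q => ⟨(q.1.1, fun j => if h : j ∈ q.1.1 then (q.2 ⟨j, h⟩ : ℕ) else 0), ?_, ?_, ?_, ?_⟩,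
      ?_, ?_⟩
    · rcases p.2.2.2.1 j j.2 with h | ⟨h1, h2⟩
      · simp [h]
      · simp [Finset.mem_filter, h1, h2]
    · exact (Finset.mem_powersetCard.mp q.1.2).1
    · exact (Finset.mem_powersetCard.mp q.1.2).2
    · intro j hj
      dsimp only at hj ⊢
      rw [dif_pos hj]
      have := (q.2 ⟨j, hj⟩).2
      simp only [Finset.mem_insert, Finset.mem_filter] at this
      rcases this with h | ⟨h1, h2⟩
      · exact Or.inl h
      · exact Or.inr ⟨h1, h2⟩
    · intro j hj
      dsimp only at hj ⊢
      rw [dif_neg hj]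
    · rintro ⟨⟨S, f⟩, h1, h2, h3, h4⟩
      apply Subtype.ext
      dsimp only
      refine Prod.ext rfl ?_
      funext j
      by_cases h : j ∈ S
      · simp [h]
      · simp only [dif_neg h]
        exact (h4 j h).symm
    · rintro ⟨⟨S, hS⟩, g⟩
      have : (fun j : (S : Finset ℕ) =>
          (⟨if h : (j : ℕ) ∈ S then (g ⟨j, h⟩ : ℕ) else 0, by
            rw [dif_pos j.2]; exact (g ⟨j, j.2⟩).2⟩ :
            (insert 0 (S.filter (· < (j : ℕ))) : Finset ℕ))) = g := by
        funext j
        exact Subtype.ext (dif_pos j.2)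
      exact congrArg _ this
  rw [Nat.card_congr e, Nat.card_eq_fintype_card, Fintype.card_sigma]
  have hstep : ∀ S : ((Finset.Icc 2 m).powersetCard z : Finset (Finset ℕ)),
      Fintype.card (∀ j : (S.1 : Finset ℕ),
        (insert 0 (S.1.filter (· < (j : ℕ))) : Finset ℕ)) = Nat.factorial z := by
    intro S
    obtain ⟨hsub, hcard⟩ := Finset.mem_powersetCard.mp S.2
    have h0 : 0 ∉ S.1 := fun h => by simpa using hsub h
    rw [Fintype.card_pi]
    have : ∀ j : (S.1 : Finset ℕ),
        Fintype.card ((insert 0 (S.1.filter (· < (j : ℕ))) : Finset ℕ)) =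
          1 + (S.1.filter (· < (j : ℕ))).card := by
      intro j
      rw [Fintype.card_coe, Finset.card_insert_of_notMem (fun h => h0 (Finset.mem_filter.mp h).1)]
      omega
    rw [Finset.prod_congr rfl (fun j _ => this j)]
    rw [Finset.prod_coe_sort S.1 (fun j => 1 + (S.1.filter (· < j)).card)]
    rw [prod_lemma z S.1 hcard]
  rw [Finset.sum_congr rfl (fun S _ => hstep S), Finset.sum_const, Finset.card_univ,
    Fintype.card_coe, Finset.card_powersetCard, Nat.card_Icc, smul_eq_mul]
  congr 2
end

section
/- Let m ≥ 1, let S be a z-element subset of {2,…,m}, and let f : S → ℕ be a function such that for every j ∈ S either f(j) = 0 or f(j) ∈ S with f(j) < j. Then the number of index sequences (α_1,…,α_m) of length m such that α_j = f(j) for all j ∈ S, and such that for every position j ∉ S the iteration j ↦ α_j starting from j eventually reaches position 1 (i.e., every position outside S lies in the component of position 1), equals (m−1−z)!. -/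
private lemma prod_card_filter_lt_aux (T : Finset ℕ) :
    ∏ j ∈ T, ((T.filter (fun x => x < j)).card + 1) = T.card.factorial := by
  induction T using Finset.strongInduction with
  | _ T ih =>
    rcases T.eq_empty_or_nonempty with h | h
    · simp [h]
    · obtain ⟨M, hM, hmax⟩ : ∃ M ∈ T, ∀ x ∈ T, x ≤ M :=
        ⟨T.max' h, T.max'_mem h, fun x hx => T.le_max' x hx⟩
      have hfM : T.filter (fun x => x < M) = T.erase M := by
        ext x
        simp only [Finset.mem_filter, Finset.mem_erase]
        constructor
        · rintro ⟨hx, hlt⟩; exact ⟨Nat.ne_of_lt hlt, hx⟩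
        · rintro ⟨hne, hx⟩; exact ⟨hx, lt_of_le_of_ne (hmax x hx) hne⟩
      have hstep : ∀ j ∈ T.erase M,
          T.filter (fun x => x < j) = (T.erase M).filter (fun x => x < j) := by
        intro j hj
        ext x
        simp only [Finset.mem_filter, Finset.mem_erase]
        constructor
        · rintro ⟨hx, hlt⟩
          refine ⟨⟨?_, hx⟩, hlt⟩
          rintro rfl
          exact absurd (hmax j (Finset.mem_of_mem_erase hj)) (not_le.mpr hlt)
        · rintro ⟨⟨_, hx⟩, hlt⟩; exact ⟨hx, hlt⟩
      rw [← Finset.mul_prod_erase T _ hM]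
      have hprod : ∏ j ∈ T.erase M, ((T.filter (fun x => x < j)).card + 1)
          = (T.erase M).card.factorial := by
        rw [Finset.prod_congr rfl (fun j hj => by rw [hstep j hj])]
        exact ih _ (Finset.erase_ssubset hM)
      rw [hprod, hfM]
      have hc : T.card = (T.erase M).card + 1 := by
        rw [Finset.card_erase_of_mem hM]
        have := Finset.card_pos.mpr h
        omega
      rw [hc, Nat.factorial_succ]

/-- given a set `S ⊆ {2,…,m}` of size `z` and `f : S → ℕ` whose values
are `0` or smaller elements of `S`, the number of index sequences `(α_1,…,α_m)`
(encoded as `α : ℕ → ℕ` with `α j < j` for `1 ≤ j ≤ m` and `α j = 0` elsewhere)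
agreeing with `f` on `S` and such that every position outside `S` lies in the
component of position `1` (the iteration `j ↦ α_j` from `j` eventually reaches `1`)
equals `(m−1−z)!`. -/
theorem card_index_sequences_extending (m z : ℕ) (hm : 1 ≤ m)
    (S : Finset ℕ) (f : ℕ → ℕ)
    (hS : S ⊆ Finset.Icc 2 m) (hz : S.card = z)
    (hf : ∀ j ∈ S, f j = 0 ∨ (f j ∈ S ∧ f j < j)) :
    Nat.card {α : ℕ → ℕ //
        (∀ j, 1 ≤ j → j ≤ m → α j < j) ∧
        (∀ j, ¬(1 ≤ j ∧ j ≤ m) → α j = 0) ∧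
        (∀ j ∈ S, α j = f j) ∧
        (∀ j, 1 ≤ j → j ≤ m → j ∉ S → ∃ k : ℕ, α^[k] j = 1)} =
      Nat.factorial (m - 1 - z) := by
  classical
  set T : Finset ℕ := Finset.Icc 2 m \ S with hTdef
  have hTmem : ∀ j, j ∈ T ↔ (2 ≤ j ∧ j ≤ m ∧ j ∉ S) := by
    intro j
    simp only [hTdef, Finset.mem_sdiff, Finset.mem_Icc]
    tauto
  have hSmem : ∀ j ∈ S, 2 ≤ j ∧ j ≤ m := by
    intro j hj
    exact Finset.mem_Icc.mp (hS hj)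
  set A : ℕ → Finset ℕ := fun j => insert 1 (T.filter (fun x => x < j)) with hAdef
  -- the equivalence
  have e : {α : ℕ → ℕ //
        (∀ j, 1 ≤ j → j ≤ m → α j < j) ∧
        (∀ j, ¬(1 ≤ j ∧ j ≤ m) → α j = 0) ∧
        (∀ j ∈ S, α j = f j) ∧
        (∀ j, 1 ≤ j → j ≤ m → j ∉ S → ∃ k : ℕ, α^[k] j = 1)} ≃
      ((j : T) → {x // x ∈ A (j : ℕ)}) := by
    refine
      { toFun := fun α j => ⟨α.1 j, ?_⟩
        invFun := fun c =>
          ⟨fun j => if h : j ∈ T then (c ⟨j, h⟩ : ℕ) else if j ∈ S then f j else 0, ?_⟩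
        left_inv := ?_
        right_inv := ?_ }
    · -- membership proof
      obtain ⟨α, h1, h2, h3, h4⟩ := α
      obtain ⟨j, hj⟩ := j
      obtain ⟨hj2, hjm, hjS⟩ := (hTmem j).mp hj
      have hzero : α 0 = 0 := h2 0 (by omega)
      have hiter0 : ∀ k, α^[k] 0 = 0 := fun k => Function.iterate_fixed hzero k
      have hSnot : ∀ s, s ∈ S → ∀ k, α^[k] s ≠ 1 := by
        intro s
        induction s using Nat.strong_induction_on with
        | _ s ih =>
          intro hs k
          have hs2 : 2 ≤ s := (hSmem s hs).1
          cases k with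
          | zero => simp; omega
          | succ k =>
            rw [Function.iterate_succ_apply, h3 s hs]
            rcases hf s hs with h0 | ⟨hmem, hlt⟩
            · rw [h0, hiter0]; omega
            · exact ih _ hlt hmem k
      obtain ⟨k, hk⟩ := h4 j (by omega) hjm hjS
      simp only [hAdef, Finset.mem_insert, Finset.mem_filter]
      by_cases hone : α j = 1
      · exact Or.inl hone
      · right
        cases k with
        | zero => simp at hk; omega
        | succ k =>
          rw [Function.iterate_succ_apply] at hk
          have hne0 : α j ≠ 0 := by
            intro h0
            rw [h0, hiter0] at hk
            exact one_ne_zero hk.symm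
          have hαS : α j ∉ S := fun hmem => hSnot _ hmem k hk
          have hlt : α j < j := h1 j (by omega) hjm
          refine ⟨(hTmem _).mpr ⟨?_, by omega, hαS⟩, hlt⟩
          omega
    · -- the constructed function satisfies the predicate
      have hc : ∀ (j : ℕ) (h : j ∈ T), (c ⟨j, h⟩ : ℕ) = 1 ∨
          ((c ⟨j, h⟩ : ℕ) ∈ T ∧ (c ⟨j, h⟩ : ℕ) < j) := by
        intro j h
        have := (c ⟨j, h⟩).2
        simp only [hAdef, Finset.mem_insert, Finset.mem_filter] at this
        tauto
      set α : ℕ → ℕ :=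
        fun j => if h : j ∈ T then (c ⟨j, h⟩ : ℕ) else if j ∈ S then f j else 0 with hα
      refine ⟨?_, ?_, ?_, ?_⟩
      · intro j hj1 hjm
        by_cases h : j ∈ T
        · have := hc j h
          have hj2 := ((hTmem j).mp h).1
          simp only [hα, dif_pos h]
          rcases this with h1 | ⟨_, hlt⟩
          · omega
          · exact hlt
        · simp only [hα, dif_neg h]
          by_cases hs : j ∈ S
          · rw [if_pos hs]
            have h2 := (hSmem j hs).1
            rcases hf j hs with h0 | ⟨_, hlt⟩
            · omega
            · exact hlt
          · rw [if_neg hs]; omega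
      · intro j hj
        have hjT : j ∉ T := by
          intro h
          obtain ⟨h2, hm', _⟩ := (hTmem j).mp h
          exact hj ⟨by omega, hm'⟩
        have hjS : j ∉ S := by
          intro h; exact hj ⟨by have := (hSmem j h).1; omega, (hSmem j h).2⟩
        simp only [hα, dif_neg hjT, if_neg hjS]
      · intro j hj
        have hjT : j ∉ T := by
          intro h; exact ((hTmem j).mp h).2.2 hj
        simp only [hα, dif_neg hjT, if_pos hj]
      · intro j
        induction j using Nat.strong_induction_on with
        | _ j ih =>
          intro hj1 hjm hjS
          by_cases hone : j = 1
          · exact ⟨0, hone⟩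
          · have hjT : j ∈ T := (hTmem j).mpr ⟨by omega, hjm, hjS⟩
            have hval : α j = (c ⟨j, hjT⟩ : ℕ) := by simp only [hα, dif_pos hjT]
            rcases hc j hjT with h1 | ⟨hmem, hlt⟩
            · exact ⟨1, by rw [Function.iterate_one, hval, h1]⟩
            · obtain ⟨h2, hm', hS'⟩ := (hTmem _).mp hmem
              obtain ⟨k, hk⟩ := ih _ (hval ▸ hlt) (by omega) hm' hS'
              refine ⟨k + 1, ?_⟩
              rw [Function.iterate_succ_apply, hval]
              exact hk
    · -- left inverse
      rintro ⟨α, h1, h2, h3, h4⟩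
      apply Subtype.ext
      funext j
      simp only
      by_cases h : j ∈ T
      · rw [dif_pos h]
      · rw [dif_neg h]
        by_cases hs : j ∈ S
        · rw [if_pos hs, h3 j hs]
        · rw [if_neg hs]
          by_cases hr : 1 ≤ j ∧ j ≤ m
          · -- must be j = 1
            have : j = 1 := by
              by_contra hne
              exact h ((hTmem j).mpr ⟨by omega, hr.2, hs⟩)
            subst this
            have := h1 1 le_rfl hm
            omega
          · exact (h2 j hr).symm
    · -- right inverse
      intro c
      funext j
      apply Subtype.ext
      simp only [dif_pos j.2]
  rw [Nat.card_congr e, Nat.card_pi]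
  have hcardA : ∀ j ∈ T, (A j).card = (T.filter (fun x => x < j)).card + 1 := by
    intro j hj
    have h1 : (1 : ℕ) ∉ T.filter (fun x => x < j) := by
      intro h
      have := ((hTmem 1).mp (Finset.mem_filter.mp h).1).1
      omega
    simp only [hAdef]
    rw [Finset.card_insert_of_notMem h1]
  have : ∏ j : T, Nat.card {x // x ∈ A (j : ℕ)} = ∏ j ∈ T, (A j).card := by
    rw [← Finset.prod_coe_sort T (fun j => (A j).card)]
    exact Finset.prod_congr rfl (fun j _ => Nat.card_eq_finsetCard (A j))
  rw [this, Finset.prod_congr rfl hcardA, prod_card_filter_lt_aux]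
  congr 1
  have : T.card = (Finset.Icc 2 m).card - S.card := Finset.card_sdiff_of_subset hS
  rw [this, Nat.card_Icc, hz]
  omega
end

section
/- Let m ≥ 1 and let λ_1,…,λ_m be nonnegative integers with Σ_{s=1}^m s·λ_s = m. The number of index sequences (α_1,…,α_m) of length m whose component partition of {1,…,m} has exactly λ_s blocks of size s for each s ∈ {1,…,m} equals m! / (1^{λ_1} 2^{λ_2} ⋯ m^{λ_m} · λ_1! λ_2! ⋯ λ_m!). -/
/-!
Record the type of an index sequence as the multiset of its component sizes, so that `λ_s` is the
multiplicity of `s`. Forgetting the last position of an index sequence of length `n + 1` leaves one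
of length `n`. If `α (n + 1) = 0`, the last position is a new singleton component; if
`α (n + 1) = v ≥ 1`, it joins the component of `v`, so a component of size `c`, reached in `c` ways
through `v`, grows to size `c + 1`. This gives a recursion for the number of index sequences of
type `μ`, and `n! / z_μ` satisfies the same recursion: adding a part `s` multiplies `z` by `s` times
the new multiplicity of `s`, and over the possible last steps these factors add up to
`μ.sum = n + 1`.
-/

open scoped Classical

open Finset Function

namespace Multiset

variable {α : Type*} [DecidableEq α] {a b : α} {s t : Multiset α}

theorem cons_eq_iff_eq_erase : a ::ₘ s = t ↔ a ∈ t ∧ s = t.erase a := by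
  constructor
  · rintro rfl
    exact ⟨mem_cons_self a s, (erase_cons_head a s).symm⟩
  · rintro ⟨ha, rfl⟩
    exact cons_erase ha

theorem erase_eq_iff_eq_cons (ha : a ∈ s) : s.erase a = t ↔ s = a ::ₘ t := by
  constructor
  · rintro rfl
    exact (cons_erase ha).symm
  · rintro rfl
    exact erase_cons_head a t

theorem cons_erase_eq_iff (ha : a ∈ s) : b ::ₘ s.erase a = t ↔ b ∈ t ∧ s = a ::ₘ t.erase b := by
  rw [cons_eq_iff_eq_erase, erase_eq_iff_eq_cons ha]

theorem sum_map_mul_ite_cons_erase {μ ν : Multiset ℕ} {S : Finset ℕ} (hν : ν.toFinset ⊆ S) :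
    (ν.map fun c => c * if (c + 1) ::ₘ ν.erase c = μ then 1 else 0).sum =
      ∑ c ∈ S, if c + 1 ∈ μ ∧ ν = c ::ₘ μ.erase (c + 1) then
        c * ((μ.erase (c + 1)).count c + 1) else 0 := by
  rw [Finset.sum_multiset_map_count, Finset.sum_subset hν fun c _ hc => by
    rw [count_eq_zero.2 (by simpa using hc), zero_smul]]
  refine Finset.sum_congr rfl fun c _ => ?_
  by_cases hc : c ∈ ν
  · simp only [cons_erase_eq_iff hc, smul_eq_mul]
    split_ifs with h
    · rw [h.2, count_cons_self]
      ring
    · simp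
  · rw [count_eq_zero.2 hc, zero_smul, if_neg]
    rintro ⟨-, rfl⟩
    exact hc (mem_cons_self _ _)

theorem mem_Icc_one_sum_of_zero_notMem {μ : Multiset ℕ} (h0 : 0 ∉ μ) {a : ℕ} (ha : a ∈ μ) :
    a ∈ Finset.Icc 1 μ.sum :=
  Finset.mem_Icc.2 ⟨Nat.pos_of_ne_zero fun h => h0 (h ▸ ha), le_sum_of_mem ha⟩

theorem count_one_add_sum_Icc_count_succ {μ : Multiset ℕ} {n : ℕ} (h0 : 0 ∉ μ)
    (hsum : μ.sum = n + 1) :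
    μ.count 1 + ∑ c ∈ Finset.Icc 1 n, (c + 1) * μ.count (c + 1) = n + 1 := by
  have := Finset.sum_multiset_count_of_subset μ (Finset.Icc 1 (n + 1)) fun a ha =>
    hsum ▸ mem_Icc_one_sum_of_zero_notMem h0 (mem_toFinset.1 ha)
  rw [hsum, ← Finset.insert_Icc_add_one_left_eq_Icc (by omega), Finset.sum_insert (by simp),
    ← Finset.map_add_right_Icc, Finset.sum_map] at this
  simpa [mul_comm] using this.symm

end Multiset

/-- `z_μ`, the order of the centralizer of a permutation of cycle type `μ`. -/
def centralizerOrder (μ : Multiset ℕ) : ℕ :=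
  ∏ s ∈ μ.toFinset, s ^ μ.count s * (μ.count s).factorial

theorem centralizerOrder_eq_prod {μ : Multiset ℕ} {S : Finset ℕ} (hS : μ.toFinset ⊆ S) :
    centralizerOrder μ = ∏ s ∈ S, s ^ μ.count s * (μ.count s).factorial :=
  prod_subset hS fun s _ hs => by simp [Multiset.count_eq_zero.2 (by simpa using hs)]

theorem centralizerOrder_cons (a : ℕ) (ν : Multiset ℕ) :
    centralizerOrder (a ::ₘ ν) = a * (ν.count a + 1) * centralizerOrder ν := by
  have hS : ν.toFinset ⊆ (a ::ₘ ν).toFinset :=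
    Multiset.toFinset_subset.2 (Multiset.subset_cons ν a)
  have ha : a ∈ (a ::ₘ ν).toFinset := by simp
  rw [centralizerOrder, centralizerOrder_eq_prod hS, ← mul_prod_erase _ _ ha,
    ← mul_prod_erase _ _ ha,
    prod_congr rfl fun s hs => by rw [Multiset.count_cons_of_ne (ne_of_mem_erase hs)],
    Multiset.count_cons_self, pow_succ, Nat.factorial_succ]
  ring

theorem centralizerOrder_pos {μ : Multiset ℕ} (h0 : 0 ∉ μ) : 0 < centralizerOrder μ :=
  prod_pos fun s hs => by
    have : 0 < s := Nat.pos_of_ne_zero fun h => h0 (h ▸ Multiset.mem_toFinset.1 hs)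
    positivity

def multisetOfCounts (S : Finset ℕ) (lam : ℕ → ℕ) : Multiset ℕ :=
  ∑ s ∈ S, Multiset.replicate (lam s) s

section multisetOfCounts

variable {S : Finset ℕ} {lam : ℕ → ℕ}

theorem count_multisetOfCounts (t : ℕ) :
    (multisetOfCounts S lam).count t = if t ∈ S then lam t else 0 := by
  simp [multisetOfCounts, Multiset.count_sum', Multiset.count_replicate]

theorem toFinset_multisetOfCounts_subset : (multisetOfCounts S lam).toFinset ⊆ S := fun t ht => by
  by_contra h
  rw [Multiset.mem_toFinset, ← Multiset.count_pos, count_multisetOfCounts, if_neg h] at ht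
  exact ht.false

theorem sum_multisetOfCounts : (multisetOfCounts S lam).sum = ∑ s ∈ S, s * lam s := by
  simp [multisetOfCounts, Multiset.sum_sum, mul_comm]

theorem centralizerOrder_multisetOfCounts :
    centralizerOrder (multisetOfCounts S lam) = ∏ s ∈ S, s ^ lam s * (lam s).factorial := by
  rw [centralizerOrder_eq_prod toFinset_multisetOfCounts_subset]
  exact prod_congr rfl fun s hs => by rw [count_multisetOfCounts, if_pos hs]

end multisetOfCounts

namespace IndexSeq

def IsIndexSeq (m : ℕ) (α : ℕ → ℕ) : Prop :=
  (∀ j, 1 ≤ j → j ≤ m → α j < j) ∧ ∀ j, ¬(1 ≤ j ∧ j ≤ m) → α j = 0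

noncomputable def component (m : ℕ) (α : ℕ → ℕ) (h : ℕ) : Finset ℕ :=
  {j ∈ Icc 1 m | ∃ k, α^[k] j = h}

def roots (m : ℕ) (α : ℕ → ℕ) : Finset ℕ :=
  {h ∈ Icc 1 m | α h = 0}

noncomputable def componentType (m : ℕ) (α : ℕ → ℕ) : Multiset ℕ :=
  (roots m α).val.map fun h => #(component m α h)

variable {m n v : ℕ} {α β : ℕ → ℕ}

theorem mem_component {h j : ℕ} :
    j ∈ component m α h ↔ (1 ≤ j ∧ j ≤ m) ∧ ∃ k, α^[k] j = h := by
  rw [component, mem_filter, mem_Icc]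

theorem mem_roots {h : ℕ} : h ∈ roots m α ↔ (1 ≤ h ∧ h ≤ m) ∧ α h = 0 := by
  rw [roots, mem_filter, mem_Icc]

theorem self_mem_component {h : ℕ} (hh : h ∈ roots m α) : h ∈ component m α h :=
  mem_component.2 ⟨(mem_roots.1 hh).1, 0, rfl⟩

theorem mem_Icc_of_mem_componentType {c : ℕ} (hc : c ∈ componentType m α) : c ∈ Icc 1 m := by
  obtain ⟨h, hh, rfl⟩ := Multiset.mem_map.1 hc
  exact mem_Icc.2 ⟨card_pos.2 ⟨h, self_mem_component hh⟩,
    (card_le_card (filter_subset _ _)).trans (by simp)⟩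

namespace IsIndexSeq

theorem apply_le (hα : IsIndexSeq m α) (x : ℕ) : α x ≤ x := by
  by_cases hx : 1 ≤ x ∧ x ≤ m
  · exact (hα.1 x hx.1 hx.2).le
  · simp [hα.2 x hx]

theorem iterate_le (hα : IsIndexSeq m α) (x k : ℕ) : α^[k] x ≤ x := by
  induction k with
  | zero => rfl
  | succ k ih => rw [iterate_succ_apply']; exact (hα.apply_le _).trans ih

theorem iterate_succ_eq_zero_of_root (hα : IsIndexSeq m α) {h : ℕ} (h0 : α h = 0) (k : ℕ) :
    α^[k + 1] h = 0 := by
  rw [iterate_succ_apply, h0]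
  exact iterate_fixed (Nat.le_zero.1 (hα.apply_le 0)) k

theorem exists_root (hα : IsIndexSeq m α) {j : ℕ} (hj : j ∈ Icc 1 m) :
    ∃ h ∈ roots m α, j ∈ component m α h := by
  induction j using Nat.strong_induction_on with
  | _ j ih =>
    rw [mem_Icc] at hj
    by_cases h0 : α j = 0
    · exact ⟨j, mem_roots.2 ⟨hj, h0⟩, mem_component.2 ⟨hj, 0, rfl⟩⟩
    · have hlt := hα.1 j hj.1 hj.2
      obtain ⟨h, hh, hjh⟩ := ih (α j) hlt (mem_Icc.2 ⟨by omega, by omega⟩)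
      obtain ⟨-, k, hk⟩ := mem_component.1 hjh
      exact ⟨h, hh, mem_component.2 ⟨hj, k + 1, hk⟩⟩

-- Past a root the orbit sits at `0`, so a position reaches at most one root.
theorem root_unique (hα : IsIndexSeq m α) {j h h' : ℕ} (hh : h ∈ roots m α)
    (hh' : h' ∈ roots m α) (hj : j ∈ component m α h) (hj' : j ∈ component m α h') :
    h = h' := by
  obtain ⟨-, k, rfl⟩ := mem_component.1 hj
  obtain ⟨-, k', rfl⟩ := mem_component.1 hj'
  have key : ∀ a b, a ≤ b → α^[a] j ∈ roots m α → α^[b] j ∈ roots m α → α^[a] j = α^[b] j := by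
    intro a b hab ha hb
    obtain ⟨d, rfl⟩ := Nat.exists_eq_add_of_le hab
    rcases d with _ | d
    · rfl
    · rw [add_comm, iterate_add_apply, hα.iterate_succ_eq_zero_of_root (mem_roots.1 ha).2] at hb
      simp [mem_roots] at hb
  rcases le_total k k' with hkk | hkk
  · exact key k k' hkk hh hh'
  · exact (key k' k hkk hh' hh).symm

theorem biUnion_component (hα : IsIndexSeq m α) :
    (roots m α).biUnion (component m α) = Icc 1 m := by
  ext j
  rw [mem_biUnion]
  constructor
  · rintro ⟨h, -, hj⟩
    exact mem_Icc.2 (mem_component.1 hj).1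
  · exact hα.exists_root

theorem pairwiseDisjoint_component (hα : IsIndexSeq m α) :
    (roots m α : Set ℕ).PairwiseDisjoint (component m α) :=
  fun _ hh _ hh' hne => disjoint_left.2 fun _ hj hj' => hne (hα.root_unique hh hh' hj hj')

theorem sum_Icc_eq_sum_roots {M : Type*} [AddCommMonoid M] (hα : IsIndexSeq m α) (f : ℕ → M) :
    ∑ j ∈ Icc 1 m, f j = ∑ h ∈ roots m α, ∑ j ∈ component m α h, f j := by
  rw [← hα.biUnion_component, sum_biUnion hα.pairwiseDisjoint_component]

theorem apply_succ (hβ : IsIndexSeq n β) : β (n + 1) = 0 :=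
  hβ.2 (n + 1) (by omega)

theorem update_succ_zero_eq_self (hβ : IsIndexSeq n β) : Function.update β (n + 1) 0 = β :=
  update_eq_self_iff.2 hβ.apply_succ.symm

theorem update_succ (hβ : IsIndexSeq n β) (hv : v ≤ n) :
    IsIndexSeq (n + 1) (Function.update β (n + 1) v) := by
  refine ⟨fun j hj1 hjn => ?_, fun j hj => ?_⟩
  · rcases eq_or_ne j (n + 1) with rfl | hj
    · rw [update_self]; omega
    · rw [update_of_ne hj]
      exact hβ.1 j hj1 (by omega)
  · rw [update_of_ne (by omega)]
    exact hβ.2 j (by omega)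

theorem update_succ_zero (hα : IsIndexSeq (n + 1) α) :
    IsIndexSeq n (Function.update α (n + 1) 0) := by
  refine ⟨fun j hj1 hjn => ?_, fun j hj => ?_⟩
  · rw [update_of_ne (by omega)]
    exact hα.1 j hj1 (by omega)
  · rcases eq_or_ne j (n + 1) with rfl | hj'
    · exact update_self ..
    · rw [update_of_ne hj']
      exact hα.2 j (by omega)

theorem iterate_update (hβ : IsIndexSeq n β) {j : ℕ} (hj : j ≤ n) (k : ℕ) :
    (Function.update β (n + 1) v)^[k] j = β^[k] j := by
  induction k with
  | zero => rfl
  | succ k ih =>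
    rw [iterate_succ_apply', iterate_succ_apply', ih,
      update_of_ne (by have := hβ.iterate_le j k; omega)]

theorem exists_iterate_update_eq_iff (hβ : IsIndexSeq n β) (hv : v ≤ n) {h : ℕ}
    (hh : h ∈ Icc 1 n) :
    (∃ k, (Function.update β (n + 1) v)^[k] (n + 1) = h) ↔ v ∈ component n β h := by
  rw [mem_Icc] at hh
  rw [mem_component]
  constructor
  · rintro ⟨_ | k, hk⟩
    · simp at hk; omega
    · rw [iterate_succ_apply, update_self, hβ.iterate_update hv] at hk
      have := hβ.iterate_le v k
      exact ⟨⟨by omega, hv⟩, k, hk⟩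
  · rintro ⟨-, k, hk⟩
    exact ⟨k + 1, by rw [iterate_succ_apply, update_self, hβ.iterate_update hv, hk]⟩

theorem component_update (hβ : IsIndexSeq n β) (hv : v ≤ n) {h : ℕ} (hh : h ∈ Icc 1 n) :
    component (n + 1) (Function.update β (n + 1) v) h =
      if v ∈ component n β h then insert (n + 1) (component n β h) else component n β h := by
  have hrest : {j ∈ Icc 1 n | ∃ k, (Function.update β (n + 1) v)^[k] j = h} =
      component n β h :=
    filter_congr fun j hj => by simp only [hβ.iterate_update (mem_Icc.1 hj).2]
  rw [component, ← insert_Icc_right_eq_Icc_add_one (by omega), filter_insert, hrest,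
    hβ.exists_iterate_update_eq_iff hv hh]
  congr 1

theorem component_succ_self (hβ : IsIndexSeq n β) : component (n + 1) β (n + 1) = {n + 1} := by
  ext j
  rw [mem_component, mem_singleton]
  constructor
  · rintro ⟨⟨-, hj⟩, k, hk⟩
    by_contra hne
    have := hβ.iterate_le j k
    omega
  · rintro rfl
    exact ⟨⟨by omega, le_rfl⟩, 0, rfl⟩

theorem componentType_succ (hβ : IsIndexSeq n β) :
    componentType (n + 1) β = 1 ::ₘ componentType n β := by
  have hroots : roots (n + 1) β = insert (n + 1) (roots n β) := by
    rw [roots, ← insert_Icc_right_eq_Icc_add_one (by omega), filter_insert, if_pos hβ.apply_succ]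
    rfl
  have hcomp : ∀ h ∈ roots n β, component (n + 1) β h = component n β h := by
    intro h hh
    have hzero : ¬ 0 ∈ component n β h := by simp [mem_component]
    simpa [hβ.update_succ_zero_eq_self, hzero] using
      hβ.component_update (v := 0) (Nat.zero_le n) (mem_Icc.2 (mem_roots.1 hh).1)
  have hnotMem : n + 1 ∉ roots n β := by simp [mem_roots]
  rw [componentType, hroots, insert_val_of_notMem hnotMem, Multiset.map_cons,
    hβ.component_succ_self, card_singleton, componentType]
  exact congrArg _ (Multiset.map_congr rfl fun h hh => by rw [hcomp h hh])

theorem componentType_update (hβ : IsIndexSeq n β) {r : ℕ} (hr : r ∈ roots n β)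
    (hv : v ∈ component n β r) :
    componentType (n + 1) (Function.update β (n + 1) v) =
      (#(component n β r) + 1) ::ₘ (componentType n β).erase #(component n β r) := by
  have hv1 := (mem_component.1 hv).1
  have hroots : roots (n + 1) (Function.update β (n + 1) v) = roots n β := by
    ext h
    rw [mem_roots, mem_roots]
    rcases eq_or_ne h (n + 1) with rfl | hne
    · simp; omega
    · rw [update_of_ne hne]
      constructor <;> rintro ⟨⟨h1, h2⟩, h0⟩ <;> exact ⟨⟨h1, by omega⟩, h0⟩
  have hcomp : ∀ h ∈ roots n β, #(component (n + 1) (Function.update β (n + 1) v) h) =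
      #(component n β h) + if h = r then 1 else 0 := by
    intro h hh
    rw [hβ.component_update hv1.2 (mem_Icc.2 (mem_roots.1 hh).1)]
    by_cases hhr : h = r
    · subst hhr
      rw [if_pos hv, if_pos rfl, card_insert_of_notMem (by simp [mem_component])]
    · rw [if_neg fun hv' => hhr (hβ.root_unique hh hr hv' hv), if_neg hhr, add_zero]
  rw [componentType, hroots, Multiset.map_congr rfl hcomp, componentType,
    ← Multiset.cons_erase (show r ∈ (roots n β).val from hr), Multiset.map_cons,
    Multiset.map_cons, Multiset.erase_cons_head, if_pos rfl]
  congr 1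
  exact Multiset.map_congr rfl fun h hh => by
    rw [if_neg ((roots n β).nodup.mem_erase_iff.1 hh).1, add_zero]

end IsIndexSeq

noncomputable def indexSeqs : ℕ → Finset (ℕ → ℕ)
  | 0 => {0}
  | n + 1 => (indexSeqs n ×ˢ range (n + 1)).image fun p => Function.update p.1 (n + 1) p.2

theorem mem_indexSeqs : α ∈ indexSeqs m ↔ IsIndexSeq m α := by
  induction m generalizing α with
  | zero =>
    rw [indexSeqs, mem_singleton]
    constructor
    · rintro rfl
      exact ⟨fun j h1 h2 => by omega, fun _ _ => rfl⟩
    · exact fun hα => funext fun j => hα.2 j (by omega)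
  | succ n ih =>
    simp only [indexSeqs, mem_image, mem_product, mem_range, ih, Prod.exists]
    constructor
    · rintro ⟨β, v, ⟨hβ, hv⟩, rfl⟩
      exact hβ.update_succ (by omega)
    · intro hα
      refine ⟨_, α (n + 1), ⟨hα.update_succ_zero, hα.1 _ (by omega) le_rfl⟩, ?_⟩
      rw [update_idem, update_eq_self]

theorem sum_indexSeqs_succ {M : Type*} [AddCommMonoid M] (f : (ℕ → ℕ) → M) :
    ∑ α ∈ indexSeqs (n + 1), f α =
      ∑ β ∈ indexSeqs n, (f β + ∑ v ∈ Icc 1 n, f (Function.update β (n + 1) v)) := by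
  have hinj : Set.InjOn (fun p : (ℕ → ℕ) × ℕ => Function.update p.1 (n + 1) p.2)
      (indexSeqs n ×ˢ range (n + 1) : Finset _) := by
    rintro ⟨β, v⟩ hp ⟨β', v'⟩ hp' heq
    simp only [coe_product, Set.mem_prod, mem_coe, mem_indexSeqs] at hp hp'
    have hv : v = v' := by simpa using congrFun heq (n + 1)
    subst hv
    rw [← hp.1.update_succ_zero_eq_self, ← hp'.1.update_succ_zero_eq_self]
    simpa using congrArg (Function.update · (n + 1) 0) heq
  have hrange : range (n + 1) = insert 0 (Icc 1 n) := by
    ext v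
    simp only [mem_range, mem_insert, mem_Icc]
    omega
  rw [indexSeqs, sum_image hinj, sum_product]
  refine sum_congr rfl fun β hβ => ?_
  rw [hrange, sum_insert (by simp), (mem_indexSeqs.1 hβ).update_succ_zero_eq_self]

noncomputable def indexSeqsOfType (m : ℕ) (μ : Multiset ℕ) : Finset (ℕ → ℕ) :=
  {α ∈ indexSeqs m | componentType m α = μ}

theorem card_indexSeqsOfType_succ_eq_sum (μ : Multiset ℕ) :
    #(indexSeqsOfType (n + 1) μ) = ∑ β ∈ indexSeqs n,
      ((if 1 ::ₘ componentType n β = μ then 1 else 0) +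
        ((componentType n β).map fun c =>
          c * if (c + 1) ::ₘ (componentType n β).erase c = μ then 1 else 0).sum) := by
  rw [indexSeqsOfType, card_filter, sum_indexSeqs_succ]
  refine sum_congr rfl fun β hβ => ?_
  have hβ := mem_indexSeqs.1 hβ
  rw [hβ.componentType_succ, hβ.sum_Icc_eq_sum_roots, componentType, Multiset.map_map,
    sum_map_val]
  congr 1
  refine sum_congr rfl fun r hr => ?_
  rw [sum_congr rfl fun v hv => by rw [hβ.componentType_update hr hv], sum_const, smul_eq_mul]
  rfl

theorem sum_indexSeqs_ite_componentType_eq (ν : Multiset ℕ) (k : ℕ) :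
    ∑ β ∈ indexSeqs n, (if componentType n β = ν then k else 0) = #(indexSeqsOfType n ν) * k := by
  rw [← sum_filter, sum_const, smul_eq_mul]
  rfl

theorem card_indexSeqsOfType_succ (μ : Multiset ℕ) :
    #(indexSeqsOfType (n + 1) μ) =
      (if 1 ∈ μ then #(indexSeqsOfType n (μ.erase 1)) else 0) +
        ∑ c ∈ Icc 1 n, if c + 1 ∈ μ then
          c * ((μ.erase (c + 1)).count c + 1) * #(indexSeqsOfType n (c ::ₘ μ.erase (c + 1)))
          else 0 := by
  rw [card_indexSeqsOfType_succ_eq_sum, sum_add_distrib]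
  congr 1
  · simp only [Multiset.cons_eq_iff_eq_erase]
    split_ifs with h1
    · simp only [h1, true_and, sum_indexSeqs_ite_componentType_eq, mul_one]
    · simp [h1]
  · rw [sum_congr rfl fun β hβ => Multiset.sum_map_mul_ite_cons_erase (μ := μ) (S := Icc 1 n)
      fun c hc => mem_Icc_of_mem_componentType (Multiset.mem_toFinset.1 hc), sum_comm]
    refine sum_congr rfl fun c _ => ?_
    split_ifs with hc
    · simp only [hc, true_and, sum_indexSeqs_ite_componentType_eq, mul_comm]
    · simp [hc]

theorem card_indexSeqsOfType_mul_centralizerOrder (n : ℕ) {μ : Multiset ℕ} (h0 : 0 ∉ μ)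
    (hsum : μ.sum = n) : #(indexSeqsOfType n μ) * centralizerOrder μ = n.factorial := by
  induction n generalizing μ with
  | zero =>
    obtain rfl : μ = 0 := Multiset.eq_zero_of_forall_notMem fun a ha => by
      have := Multiset.mem_Icc_one_sum_of_zero_notMem h0 ha
      simp [hsum] at this
    simp [indexSeqsOfType, indexSeqs, componentType, roots, centralizerOrder]
  | succ n ih =>
    have hnew : (if 1 ∈ μ then #(indexSeqsOfType n (μ.erase 1)) else 0) * centralizerOrder μ =
        μ.count 1 * n.factorial := by
      split_ifs with h1
      · obtain ⟨ν, rfl⟩ := Multiset.exists_cons_of_mem h1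
        have hν := ih (μ := ν) (fun h => h0 (Multiset.mem_cons_of_mem h))
          (by simp at hsum; omega)
        rw [Multiset.erase_cons_head, centralizerOrder_cons, Multiset.count_cons_self, ← hν]
        ring
      · simp [Multiset.count_eq_zero.2 h1]
    have hgrow : ∀ c ∈ Icc 1 n, (if c + 1 ∈ μ then c * ((μ.erase (c + 1)).count c + 1) *
        #(indexSeqsOfType n (c ::ₘ μ.erase (c + 1))) else 0) * centralizerOrder μ =
        (c + 1) * μ.count (c + 1) * n.factorial := by
      intro c hc
      split_ifs with hc1
      · obtain ⟨ν, rfl⟩ := Multiset.exists_cons_of_mem hc1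
        have hν := ih (μ := c ::ₘ ν)
          (by
            simp only [Multiset.mem_cons, not_or]
            exact ⟨by simp at hc; omega, fun h => h0 (Multiset.mem_cons_of_mem h)⟩)
          (by simp at hsum ⊢; omega)
        rw [centralizerOrder_cons] at hν
        rw [Multiset.erase_cons_head, centralizerOrder_cons, Multiset.count_cons_self, ← hν]
        ring
      · simp [Multiset.count_eq_zero.2 hc1]
    rw [card_indexSeqsOfType_succ, add_mul, sum_mul, hnew, sum_congr rfl hgrow, ← sum_mul,
      ← add_mul, Multiset.count_one_add_sum_Icc_count_succ h0 hsum, Nat.factorial_succ]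

theorem count_componentType (s : ℕ) :
    (componentType m α).count s = #{h ∈ Icc 1 m | α h = 0 ∧ #(component m α h) = s} := by
  rw [componentType, Multiset.count_map, ← filter_val, roots, filter_filter]
  simp only [eq_comm (a := s)]
  rfl

theorem mem_indexSeqsOfType_multisetOfCounts {lam : ℕ → ℕ} :
    α ∈ indexSeqsOfType m (multisetOfCounts (Icc 1 m) lam) ↔ IsIndexSeq m α ∧
      ∀ s ∈ Icc 1 m, #{h ∈ Icc 1 m | α h = 0 ∧ #(component m α h) = s} = lam s := by
  rw [indexSeqsOfType, mem_filter, mem_indexSeqs]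
  refine and_congr Iff.rfl ⟨fun h s hs => ?_, fun h => Multiset.ext.2 fun t => ?_⟩
  · rw [← count_componentType, h, count_multisetOfCounts, if_pos hs]
  · rw [count_multisetOfCounts]
    split_ifs with ht
    · exact (count_componentType t).trans (h t ht)
    · exact Multiset.count_eq_zero.2 fun hmem => ht (mem_Icc_of_mem_componentType hmem)

end IndexSeq

theorem card_index_sequences_with_component_type_general (m : ℕ)
    (lam : ℕ → ℕ) (hlam : ∑ s ∈ Finset.Icc 1 m, s * lam s = m) :
    (Nat.card {α : ℕ → ℕ //
        (∀ j, 1 ≤ j → j ≤ m → α j < j) ∧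
        (∀ j, ¬(1 ≤ j ∧ j ≤ m) → α j = 0) ∧
        ∀ s ∈ Finset.Icc 1 m,
          ((Finset.Icc 1 m).filter fun h => α h = 0 ∧
            ((Finset.Icc 1 m).filter fun j => ∃ k : ℕ, α^[k] j = h).card = s).card
            = lam s} : ℚ) =
      (Nat.factorial m : ℚ) /
        ∏ s ∈ Finset.Icc 1 m, ((s : ℚ) ^ lam s * (Nat.factorial (lam s) : ℚ)) := by
  set μ := multisetOfCounts (Icc 1 m) lam
  have h0 : 0 ∉ μ := fun h => by
    simpa using toFinset_multisetOfCounts_subset (Multiset.mem_toFinset.2 h)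
  have hcount :=
    IndexSeq.card_indexSeqsOfType_mul_centralizerOrder m h0 (sum_multisetOfCounts.trans hlam)
  have hpos := centralizerOrder_pos h0
  rw [centralizerOrder_multisetOfCounts] at hcount hpos
  calc _ = (#(IndexSeq.indexSeqsOfType m μ) : ℚ) := by
        rw [← Nat.card_eq_finsetCard]
        refine congrArg _ (Nat.card_congr (Equiv.subtypeEquivRight fun α => ?_))
        rw [IndexSeq.mem_indexSeqsOfType_multisetOfCounts, IndexSeq.IsIndexSeq, and_assoc]
        rfl
    _ = _ := by
        rw [eq_div_iff (by exact_mod_cast hpos.ne')]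
        exact_mod_cast hcount

/-- the number of index sequences `(α_1,…,α_m)` (encoded as `α : ℕ → ℕ`
with `α j < j` for `1 ≤ j ≤ m` and `α j = 0` elsewhere) whose component partition of
`{1,…,m}` has exactly `λ_s` blocks of size `s` for each `s` equals
`m! / (1^{λ_1} 2^{λ_2} ⋯ m^{λ_m} · λ_1! ⋯ λ_m!)`.  The component of a position `h`
with `α_h = 0` is the set of positions `j` from which the iteration `j ↦ α_j`
eventually reaches `h`. -/
theorem card_index_sequences_with_component_type (m : ℕ) (hm : 1 ≤ m)
    (lam : ℕ → ℕ) (hlam : ∑ s ∈ Finset.Icc 1 m, s * lam s = m) :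
    (Nat.card {α : ℕ → ℕ //
        (∀ j, 1 ≤ j → j ≤ m → α j < j) ∧
        (∀ j, ¬(1 ≤ j ∧ j ≤ m) → α j = 0) ∧
        ∀ s ∈ Finset.Icc 1 m,
          ((Finset.Icc 1 m).filter fun h => α h = 0 ∧
            ((Finset.Icc 1 m).filter fun j => ∃ k : ℕ, α^[k] j = h).card = s).card
            = lam s} : ℚ) =
      (Nat.factorial m : ℚ) /
        ∏ s ∈ Finset.Icc 1 m, ((s : ℚ) ^ lam s * (Nat.factorial (lam s) : ℚ)) :=
  card_index_sequences_with_component_type_general m lam hlam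
end

section
/- Let m ≥ 1, let σ be a permutation of {1,…,m} with covering table (k_1,…,k_m), and define the index sequence α = (α_1,…,α_m) by α_j = k_{m+1−j} (so 0 ≤ α_j ≤ j−1). Then for every cycle of σ with element set C ⊆ {1,…,m} and largest element s*, the set {m+1−s : s ∈ C} is exactly the component of the position m+1−s* in α; this gives a bijection between the cycles of σ (fixed points counted as cycles) and the components of α. In particular, the number of positions j with α_j = 0 equals the number of cycles of σ. -/
open scoped Classical

/-- The standard representation of a permutation `σ` of `{1,…,m}` (elements encoded as
`Fin m`, with `x : Fin m` standing for the value `x+1`): each cycle is written with its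
largest element first followed by its successive images, and the cycles are listed in
increasing order of their largest elements. -/
noncomputable def stdRep {m : ℕ} (σ : Equiv.Perm (Fin m)) : List (Fin m) :=
  ((List.finRange m).filter fun c => decide (∀ y : Fin m, σ.SameCycle c y → y ≤ c)).flatMap
    fun c =>
      (List.range (Finset.univ.filter fun y : Fin m => σ.SameCycle c y).card).map
        fun k => (σ ^ k) c

/-- The covering table `K(σ) = (k_1,…,k_m)`: for the element `i = x+1` (with
`x : Fin m`), `k_i = m+1−t` where `t` is the rightmost element greater than `i`
occurring to the left of `i` in the standard representation, and `k_i = 0` otherwise. -/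
noncomputable def covTable {m : ℕ} (σ : Equiv.Perm (Fin m)) (x : Fin m) : ℕ :=
  match (((stdRep σ).takeWhile fun t => decide (t ≠ x)).filter
      fun t => decide (x < t)).getLast? with
  | none => 0
  | some t => m - t.val

/-- The index sequence `α = (α_1,…,α_m)` with `α_j = k_{m+1−j}`, encoded as a
function on positions `j ∈ ℕ` (equal to `0` outside `{1,…,m}`); the element of value
`m+1−j` is `⟨m−j, _⟩ : Fin m`. -/
noncomputable def alphaOf {m : ℕ} (σ : Equiv.Perm (Fin m)) : ℕ → ℕ :=
  fun j => if h : 1 ≤ j ∧ j ≤ m then covTable σ ⟨m - j, by omega⟩ else 0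

/-- The component of a position `h` in the index sequence `α`: the set of positions
`j ∈ {1,…,m}` from which the iteration `j ↦ α_j` eventually reaches `h`. -/
noncomputable def componentOf (m : ℕ) (α : ℕ → ℕ) (h : ℕ) : Finset ℕ :=
  (Finset.Icc 1 m).filter fun j => ∃ k : ℕ, α^[k] j = h

/-- The number of orbits of `σ` (fixed points counted as orbits): the number of
distinct `SameCycle`-classes. -/
noncomputable def numOrbits {m : ℕ} (σ : Equiv.Perm (Fin m)) : ℕ :=
  (Finset.univ.image fun x : Fin m =>
    Finset.univ.filter fun y : Fin m => σ.SameCycle x y).card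

/-!
The standard representation lists each cycle as a block headed by its maximum, the blocks in
increasing order of their maxima. Hence nothing to the left of a cycle maximum exceeds it, so its
covering-table entry is `0`; every other element `x` is covered by an element `t > x` of its own
block, since the head of that block already exceeds `x`. Read in positions `m − x`, the iteration
`j ↦ α_j` therefore moves inside the cycle of `x` to strictly larger elements until it reaches the
maximum, whose position it sends to `0`: the components of `α` are the cycles of `σ`, rooted at
the positions of their maxima.
-/

open Equiv Finset Function

theorem List.takeWhile_append_of_mem_of_eq_false {α : Type*} {p : α → Bool} {l₁ l₂ : List α}
    {a : α} (ha : a ∈ l₁) (hpa : p a = false) : (l₁ ++ l₂).takeWhile p = l₁.takeWhile p := by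
  induction l₁ with
  | nil => simp at ha
  | cons b l ih =>
    by_cases hb : p b
    · rcases List.mem_cons.1 ha with rfl | ha
      · simp_all
      · simp [hb, ih ha]
    · simp [hb]

namespace Equiv.Perm

section Fintype

variable {α : Type*} [Fintype α] [DecidableEq α] {σ : Perm α} {x y : α}

theorem SameCycle.exists_pow_lt_card_filter (h : σ.SameCycle x y) :
    ∃ k < #{z | σ.SameCycle x z}, (σ ^ k) x = y := by
  by_cases hx : x ∈ σ.support
  · have hsupp : ({z | σ.SameCycle x z} : Finset α) = (σ.cycleOf x).support := by
      ext z
      rw [mem_support_cycleOf_iff]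
      simp [hx]
    rw [hsupp]
    exact h.exists_pow_eq_of_mem_support hx
  · refine ⟨0, card_pos.2 ⟨x, by simp [SameCycle.rfl]⟩, ?_⟩
    simpa using h.eq_of_left (notMem_support.1 hx)

theorem IsCycleOn.eq_filter_sameCycle {s : Finset α} (hσ : σ.IsCycleOn s) (hx : x ∈ s) :
    s = ({y | σ.SameCycle x y} : Finset α) := by
  ext y
  refine ⟨fun hy => mem_filter.2 ⟨mem_univ y, hσ.2 hx hy⟩, fun h => ?_⟩
  obtain ⟨k, rfl⟩ := (mem_filter.1 h).2.exists_nat_pow_eq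
  rw [coe_pow]
  exact hσ.1.mapsTo.iterate k hx

variable (σ)

def cycleBlock (x : α) : List α :=
  (List.range #{y | σ.SameCycle x y}).map fun k => (σ ^ k) x

theorem mem_cycleBlock : y ∈ σ.cycleBlock x ↔ σ.SameCycle x y := by
  constructor
  · intro hy
    obtain ⟨k, -, rfl⟩ := List.mem_map.1 hy
    exact sameCycle_pow_right.2 .rfl
  · intro h
    obtain ⟨k, hk, rfl⟩ := h.exists_pow_lt_card_filter
    exact List.mem_map.2 ⟨k, List.mem_range.2 hk, rfl⟩

theorem exists_cycleBlock_eq_cons (x : α) : ∃ tl, σ.cycleBlock x = x :: tl := by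
  obtain ⟨n, hn⟩ := Nat.exists_eq_add_one.2 (card_pos.2 ⟨x, by simp [SameCycle.rfl]⟩ :
    0 < #{y | σ.SameCycle x y})
  exact ⟨_, by rw [cycleBlock, hn, List.range_succ_eq_map, List.map_cons]; rfl⟩

end Fintype

section LinearOrder

variable {α : Type*} [Fintype α] [LinearOrder α] (σ : Perm α) {x y : α}

def cycleMax (x : α) : α :=
  ({y | σ.SameCycle x y} : Finset α).max' ⟨x, by simp [SameCycle.rfl]⟩

theorem sameCycle_cycleMax (x : α) : σ.SameCycle x (σ.cycleMax x) :=
  (mem_filter.1 (max'_mem _ _)).2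

variable {σ}

theorem SameCycle.le_cycleMax (h : σ.SameCycle x y) : y ≤ σ.cycleMax x :=
  le_max' _ _ (by simpa using h)

theorem le_cycleMax_self (x : α) : x ≤ σ.cycleMax x :=
  SameCycle.rfl.le_cycleMax

theorem SameCycle.cycleMax_eq (h : σ.SameCycle x y) : σ.cycleMax x = σ.cycleMax y :=
  le_antisymm (h.symm.trans (sameCycle_cycleMax σ x)).le_cycleMax
    (h.trans (sameCycle_cycleMax σ y)).le_cycleMax

theorem cycleMax_cycleMax (x : α) : σ.cycleMax (σ.cycleMax x) = σ.cycleMax x :=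
  (sameCycle_cycleMax σ x).cycleMax_eq.symm

theorem cycleMax_eq_self_iff : σ.cycleMax x = x ↔ ∀ z, σ.SameCycle x z → z ≤ x :=
  ⟨fun h _ hz => h ▸ hz.le_cycleMax,
    fun h => le_antisymm (h _ (sameCycle_cycleMax σ x)) (le_cycleMax_self x)⟩

end LinearOrder

end Equiv.Perm

open Equiv.Perm

section CoveringTable

variable {m : ℕ} (σ : Perm (Fin m))

theorem stdRep_eq_append (x : Fin m) :
    ∃ A B, stdRep σ = A ++ σ.cycleBlock (σ.cycleMax x) ++ B ∧
      ∀ a ∈ A, σ.cycleMax a < σ.cycleMax x := by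
  set L := (List.finRange m).filter fun c => decide (∀ y, σ.SameCycle c y → y ≤ c)
  have hL : ∀ c, c ∈ L ↔ σ.cycleMax c = c := by simp [L, cycleMax_eq_self_iff]
  obtain ⟨L₁, L₂, hsplit⟩ := List.append_of_mem ((hL _).2 (cycleMax_cycleMax x))
  have hsorted : (L₁ ++ σ.cycleMax x :: L₂).Pairwise (· < ·) :=
    hsplit ▸ (List.pairwise_lt_finRange m).filter _
  refine ⟨L₁.flatMap σ.cycleBlock, L₂.flatMap σ.cycleBlock, ?_, fun a ha => ?_⟩
  · change L.flatMap σ.cycleBlock = _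
    simp [hsplit]
  · obtain ⟨c, hc, hac⟩ := List.mem_flatMap.1 ha
    have hcmax : σ.cycleMax c = c := (hL c).1 (hsplit ▸ List.mem_append_left _ hc)
    rw [← ((mem_cycleBlock σ).1 hac).cycleMax_eq, hcmax]
    exact (List.pairwise_append.1 hsorted).2.2 c hc _ List.mem_cons_self

theorem stdRep_takeWhile_ne (x : Fin m) :
    ∃ A tl, (stdRep σ).takeWhile (fun t => decide (t ≠ x)) =
        A ++ (σ.cycleMax x :: tl).takeWhile (fun t => decide (t ≠ x)) ∧
      (∀ a ∈ A, σ.cycleMax a < σ.cycleMax x) ∧ ∀ y ∈ tl, σ.SameCycle x y := by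
  obtain ⟨A, B, hrep, hA⟩ := stdRep_eq_append σ x
  obtain ⟨tl, htl⟩ := exists_cycleBlock_eq_cons σ (σ.cycleMax x)
  have hx : x ∈ σ.cycleBlock (σ.cycleMax x) :=
    (mem_cycleBlock σ).2 (sameCycle_cycleMax σ x).symm
  refine ⟨A, tl, ?_, hA, fun y hy => ?_⟩
  · rw [hrep, List.append_assoc, List.takeWhile_append_of_pos,
      List.takeWhile_append_of_mem_of_eq_false hx (by simp), htl]
    intro a ha
    simpa using fun hax : a = x => (hA a ha).ne (by rw [hax])
  · have hy : y ∈ σ.cycleBlock (σ.cycleMax x) := htl ▸ List.mem_cons_of_mem _ hy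
    exact (sameCycle_cycleMax σ x).trans ((mem_cycleBlock σ).1 hy)

theorem covTable_eq_zero {x : Fin m} (h : σ.cycleMax x = x) : covTable σ x = 0 := by
  obtain ⟨A, tl, htw, hA, -⟩ := stdRep_takeWhile_ne σ x
  have hfilter : A.filter (fun t => decide (x < t)) = [] :=
    List.filter_eq_nil_iff.2 fun a ha => by
      simpa using ((le_cycleMax_self a).trans_lt (h ▸ hA a ha)).le
  unfold covTable
  rw [htw, h, List.takeWhile_cons_of_neg (by simp), List.append_nil, hfilter]
  rfl

theorem exists_covTable_eq {x : Fin m} (h : σ.cycleMax x ≠ x) :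
    ∃ t, σ.SameCycle x t ∧ x < t ∧ covTable σ x = m - t.val := by
  obtain ⟨A, tl, htw, -, htl⟩ := stdRep_takeWhile_ne σ x
  have hx : x < σ.cycleMax x := (le_cycleMax_self x).lt_of_ne' h
  set tw := tl.takeWhile fun t => decide (t ≠ x)
  obtain ⟨t, ht⟩ : ∃ t, (σ.cycleMax x :: tw.filter fun t => decide (x < t)).getLast? = some t :=
    ⟨_, List.getLast?_cons⟩
  have hlast : ((A ++ σ.cycleMax x :: tw).filter fun t => decide (x < t)).getLast? = some t := by
    rw [List.filter_append, List.filter_cons_of_pos (by simpa using hx),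
      List.getLast?_append_cons, ht]
  have hcov : covTable σ x = m - t.val := by
    unfold covTable
    rw [htw, List.takeWhile_cons_of_pos (by simpa using h), hlast]
  rcases List.mem_cons.1 (List.mem_of_getLast? ht) with rfl | hmem
  · exact ⟨_, sameCycle_cycleMax σ x, hx, hcov⟩
  · obtain ⟨htw', hxt⟩ := List.mem_filter.1 hmem
    exact ⟨t, htl t ((List.takeWhile_prefix _).subset htw'), by simpa using hxt, hcov⟩

end CoveringTable

theorem componentOf_injOn {m : ℕ} {α : ℕ → ℕ} (hα : α 0 = 0) :
    Set.InjOn (componentOf m α) ↑((Icc 1 m).filter fun h => α h = 0) := by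
  intro h hh h' hh' heq
  obtain ⟨hh, h0⟩ := mem_filter.1 hh
  have hmem : h ∈ componentOf m α h' := heq ▸ mem_filter.2 ⟨hh, 0, rfl⟩
  obtain ⟨-, _ | k, hk⟩ := mem_filter.1 hmem
  · exact hk
  · rw [iterate_succ_apply, h0, iterate_fixed hα] at hk
    have := (mem_Icc.1 (mem_filter.1 hh').1).1
    omega

section IndexSequence

variable {m : ℕ} (σ : Perm (Fin m))

theorem exists_sub_val_eq {j : ℕ} (hj : j ∈ Icc 1 m) : ∃ x : Fin m, m - x.val = j := by
  obtain ⟨h1, hm⟩ := mem_Icc.1 hj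
  exact ⟨⟨m - j, by omega⟩, show m - (m - j) = j by omega⟩

theorem sub_val_mem_Icc (x : Fin m) : m - x.val ∈ Icc 1 m :=
  mem_Icc.2 ⟨by omega, by omega⟩

theorem alphaOf_zero : alphaOf σ 0 = 0 := by
  simp [alphaOf]

theorem alphaOf_sub_val (x : Fin m) : alphaOf σ (m - x.val) = covTable σ x := by
  rw [alphaOf, dif_pos (mem_Icc.1 (sub_val_mem_Icc x))]
  congr 1
  ext
  change m - (m - x.val) = x.val
  omega

theorem alphaOf_sub_val_eq_zero_iff (x : Fin m) :
    alphaOf σ (m - x.val) = 0 ↔ σ.cycleMax x = x := by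
  rw [alphaOf_sub_val]
  by_cases h : σ.cycleMax x = x
  · simp [covTable_eq_zero σ h, h]
  · obtain ⟨t, -, -, ht⟩ := exists_covTable_eq σ h
    simp only [ht, h, iff_false]
    omega

theorem exists_alphaOf_sub_val_eq {x : Fin m} (h : σ.cycleMax x ≠ x) :
    ∃ t, σ.SameCycle x t ∧ x < t ∧ alphaOf σ (m - x.val) = m - t.val := by
  simpa only [alphaOf_sub_val] using exists_covTable_eq σ h

theorem iterate_alphaOf_sub_val (k : ℕ) (x : Fin m) :
    (alphaOf σ)^[k] (m - x.val) = 0 ∨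
      ∃ t, σ.SameCycle x t ∧ (alphaOf σ)^[k] (m - x.val) = m - t.val := by
  induction k generalizing x with
  | zero => exact .inr ⟨x, .rfl, rfl⟩
  | succ k ih =>
    rw [iterate_succ_apply]
    by_cases h : σ.cycleMax x = x
    · rw [(alphaOf_sub_val_eq_zero_iff σ x).2 h, iterate_fixed (alphaOf_zero σ)]
      exact .inl rfl
    · obtain ⟨t, hxt, -, ht⟩ := exists_alphaOf_sub_val_eq σ h
      rw [ht]
      exact (ih t).imp_right fun ⟨u, htu, hu⟩ => ⟨u, hxt.trans htu, hu⟩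

theorem exists_iterate_alphaOf_eq_cycleMax (x : Fin m) :
    ∃ k, (alphaOf σ)^[k] (m - x.val) = m - (σ.cycleMax x).val := by
  by_cases h : σ.cycleMax x = x
  · exact ⟨0, by rw [h]; rfl⟩
  · obtain ⟨t, hxt, hlt, ht⟩ := exists_alphaOf_sub_val_eq σ h
    obtain ⟨k, hk⟩ := exists_iterate_alphaOf_eq_cycleMax t
    exact ⟨k + 1, by rw [iterate_succ_apply, ht, hk, hxt.cycleMax_eq]⟩
termination_by m - x.val
decreasing_by
  have := Fin.lt_def.1 hlt
  omega

theorem componentOf_sub_cycleMax (x : Fin m) :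
    componentOf m (alphaOf σ) (m - (σ.cycleMax x).val) =
      ({y | σ.SameCycle x y} : Finset (Fin m)).image fun s => m - s.val := by
  ext j
  simp only [componentOf, mem_filter, mem_image, mem_univ, true_and]
  constructor
  · rintro ⟨hj, k, hk⟩
    obtain ⟨s, rfl⟩ := exists_sub_val_eq hj
    refine ⟨s, ?_, rfl⟩
    rcases iterate_alphaOf_sub_val σ k s with h0 | ⟨t, hst, ht⟩
    · have := (σ.cycleMax x).isLt
      omega
    · have htmax : t = σ.cycleMax x := by
        ext
        have := t.isLt
        have := (σ.cycleMax x).isLt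
        omega
      exact (sameCycle_cycleMax σ x).trans (htmax ▸ hst).symm
  · rintro ⟨s, hs, rfl⟩
    obtain ⟨k, hk⟩ := exists_iterate_alphaOf_eq_cycleMax σ s
    exact ⟨sub_val_mem_Icc s, k, hk.trans (by rw [hs.cycleMax_eq])⟩

theorem filter_alphaOf_eq_zero :
    (Icc 1 m).filter (fun j => alphaOf σ j = 0) =
      univ.image fun x => m - (σ.cycleMax x).val := by
  ext j
  simp only [mem_filter, mem_image, mem_univ, true_and]
  constructor
  · rintro ⟨hj, h0⟩
    obtain ⟨x, rfl⟩ := exists_sub_val_eq hj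
    exact ⟨x, by rw [(alphaOf_sub_val_eq_zero_iff σ x).1 h0]⟩
  · rintro ⟨x, rfl⟩
    exact ⟨sub_val_mem_Icc _, (alphaOf_sub_val_eq_zero_iff σ _).2 (cycleMax_cycleMax x)⟩

end IndexSequence

theorem cycles_correspond_to_components_general (m : ℕ) (σ : Equiv.Perm (Fin m)) :
    (∀ (C : Finset (Fin m)) (hC : C.Nonempty), σ.IsCycleOn ↑C →
        C.image (fun s : Fin m => m - s.val)
          = componentOf m (alphaOf σ) (m - (C.max' hC).val)) ∧
      ((Finset.univ.image fun x : Fin m =>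
            Finset.univ.filter fun y : Fin m => σ.SameCycle x y).image
          (fun C => C.image fun s : Fin m => m - s.val)
        = ((Finset.Icc 1 m).filter fun h => alphaOf σ h = 0).image
            (componentOf m (alphaOf σ))) ∧
      ((Finset.Icc 1 m).filter fun j => alphaOf σ j = 0).card = numOrbits σ := by
  have hcycles : (univ.image fun x : Fin m => ({y | σ.SameCycle x y} : Finset (Fin m))).image
      (fun C => C.image fun s : Fin m => m - s.val) =
      ((Icc 1 m).filter fun h => alphaOf σ h = 0).image (componentOf m (alphaOf σ)) := by
    rw [filter_alphaOf_eq_zero, image_image, image_image]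
    congr 1
    funext x
    exact (componentOf_sub_cycleMax σ x).symm
  refine ⟨fun C hC hσC => ?_, hcycles, ?_⟩
  · obtain ⟨x, hx⟩ := id hC
    obtain rfl := hσC.eq_filter_sameCycle hx
    exact (componentOf_sub_cycleMax σ x).symm
  · have hinj : Injective fun C : Finset (Fin m) => C.image fun s => m - s.val :=
      image_injective fun s t hst => Fin.ext (by have := s.isLt; have := t.isLt; omega)
    rw [numOrbits, ← card_image_of_injective _ hinj, hcycles,
      card_image_of_injOn (componentOf_injOn (alphaOf_zero σ))]

/-- for every cycle of `σ` with element set `C` and largest element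
`s*`, the set `{m+1−s : s ∈ C}` (in position coordinates, `{m − s.val : s ∈ C}`) is
exactly the component of the position `m+1−s* = m − s*.val` in `α`; this correspondence
maps the set of cycles of `σ` onto the set of components of `α`, and in particular the
number of positions `j` with `α_j = 0` equals the number of cycles of `σ`. -/
theorem cycles_correspond_to_components (m : ℕ) (hm : 1 ≤ m) (σ : Equiv.Perm (Fin m)) :
    (∀ (C : Finset (Fin m)) (hC : C.Nonempty), σ.IsCycleOn ↑C →
        C.image (fun s : Fin m => m - s.val)
          = componentOf m (alphaOf σ) (m - (C.max' hC).val)) ∧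
      ((Finset.univ.image fun x : Fin m =>
            Finset.univ.filter fun y : Fin m => σ.SameCycle x y).image
          (fun C => C.image fun s : Fin m => m - s.val)
        = ((Finset.Icc 1 m).filter fun h => alphaOf σ h = 0).image
            (componentOf m (alphaOf σ))) ∧
      ((Finset.Icc 1 m).filter fun j => alphaOf σ j = 0).card = numOrbits σ :=
  cycles_correspond_to_components_general m σ
end
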